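/- Let m be even and let 𝒜 be a symmetric tensor of order m and dimension n. Suppose t, μ ∈ ℝ are such that t − 𝒜x^m + μ(Σ_{i=1}^n x_i^m − 1) ≥ 0 for all x ∈ ℝ^n. Then t ≥ μ and 𝒜x^m ≤ μ·Σ_{i=1}^n x_i^m for all x ∈ ℝ^n; in particular, every H-eigenvalue λ of 𝒜 satisfies λ ≤ t. -/
import Mathlib


open MvPolynomial Finset

noncomputable section

/-- `tmul A x = 𝒜 x^m`, the homogeneous form associated with an
`m`-th order `n`-dimensional tensor `A`. -/
def tmul {m n : ℕ} (A : (Fin m → Fin n) → ℝ) (x : Fin n → ℝ) : ℝ :=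
  ∑ g : Fin m → Fin n, A g * ∏ j, x (g j)

/-- A tensor is symmetric if its entries are invariant under permutations of the indices. -/
def IsSymT {m n : ℕ} (A : (Fin m → Fin n) → ℝ) : Prop :=
  ∀ (σ : Equiv.Perm (Fin m)) (g : Fin m → Fin n), A (g ∘ σ) = A g

/-- `lam` is an H-eigenvalue of a tensor of order `m + 1`:
there is a nonzero `x` with `𝒜 x^m = lam * x^{[m]}`. -/
def IsHEig {m n : ℕ} (A : (Fin (m + 1) → Fin n) → ℝ) (lam : ℝ) : Prop :=
  ∃ x : Fin n → ℝ, x ≠ 0 ∧ ∀ i : Fin n,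
    (∑ g : Fin m → Fin n, A (Fin.cons i g) * ∏ j, x (g j)) = lam * x i ^ m

/-- `𝒜_Γ x_Γ^m` for a subtensor `B` indexed by an index set `Γ ⊆ {1,…,n}`. -/
def subTmul {m n : ℕ} (Γ : Finset (Fin n)) (B : (Fin m → Γ) → ℝ) (x : Fin n → ℝ) : ℝ :=
  ∑ g : Fin m → Γ, B g * ∏ j, x (g j).1

/-- An index tuple is off-diagonal if not all of its entries coincide. -/
def NotDiag {m : ℕ} {I : Type*} (g : Fin m → I) : Prop := ¬ ∀ j j' : Fin m, g j = g j'

/-- Condition (iii) in the definition of a W-tensor, for one subtensor. -/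
def WCondIII {m n : ℕ} {Γ : Finset (Fin n)} (B : (Fin m → Γ) → ℝ) : Prop :=
  (∃ gb : Fin m → Γ, NotDiag gb ∧ ∀ g : Fin m → Γ, NotDiag g →
      (∀ σ : Equiv.Perm (Fin m), g ≠ gb ∘ σ) → B g = 0) ∨
  (∀ g : Fin m → Γ, NotDiag g → 0 ≤ B g)

/-- Condition (i) in the definition of a W-tensor. -/
def WCondI {n s : ℕ} (Γ : Fin s → Finset (Fin n)) : Prop :=
  ∀ p : Fin s, 0 < (p : ℕ) →
    (((Finset.univ.filter fun l => l < p).biUnion Γ) ∩ Γ p).card ≤ 1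

/-- W-tensor. -/
def IsWTensor {m n : ℕ} (A : (Fin m → Fin n) → ℝ) : Prop :=
  ∃ (s : ℕ) (Γ : Fin s → Finset (Fin n)) (B : ∀ l : Fin s, (Fin m → Γ l) → ℝ),
    0 < s ∧ s ≤ n ∧
    Function.Injective Γ ∧
    Finset.univ.biUnion Γ = Finset.univ ∧
    WCondI Γ ∧
    (∀ x : Fin n → ℝ, tmul A x = ∑ l, subTmul (Γ l) (B l) x) ∧
    (∀ l, WCondIII (B l))

/-- Sums of squares of polynomials. -/
def IsSOSPoly {σ : Type*} (p : MvPolynomial σ ℝ) : Prop :=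
  ∃ (r : ℕ) (q : Fin r → MvPolynomial σ ℝ), p = ∑ j, q j ^ 2

/-- The polynomial `𝒜 x^m` as a formal multivariate polynomial. -/
def tpoly {m n : ℕ} (A : (Fin m → Fin n) → ℝ) : MvPolynomial (Fin n) ℝ :=
  ∑ g : Fin m → Fin n, MvPolynomial.C (A g) * ∏ j, MvPolynomial.X (g j)

/-- The polynomial `𝒜_Γ x_Γ^m` of a subtensor, in the variables `x_Γ`. -/
def subTpoly {m n : ℕ} (Γ : Finset (Fin n)) (B : (Fin m → Γ) → ℝ) : MvPolynomial Γ ℝ :=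
  ∑ g : Fin m → Γ, MvPolynomial.C (B g) * ∏ j, MvPolynomial.X (g j)

/-- A (symmetric) tensor is copositive if `𝒜 x^m ≥ 0` for all entrywise-nonnegative `x`. -/
def Copositive {m n : ℕ} (A : (Fin m → Fin n) → ℝ) : Prop :=
  ∀ x : Fin n → ℝ, (∀ i, 0 ≤ x i) → 0 ≤ tmul A x


lemma tmul_smul' {m n : ℕ} (A : (Fin m → Fin n) → ℝ) (c : ℝ) (x : Fin n → ℝ) :
    tmul A (c • x) = c ^ m * tmul A x := by
  unfold tmul
  rw [Finset.mul_sum]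
  refine Finset.sum_congr rfl fun g _ => ?_
  simp only [Pi.smul_apply, smul_eq_mul]
  rw [Finset.prod_mul_distrib, Finset.prod_const]
  simp only [Finset.card_univ, Fintype.card_fin]
  ring

/-- Feasibility bound in Theorem 3.2 (3.2): if `t − 𝒜x^m + μ(∑ x_i^m − 1) ≥ 0` for all `x`,
then `t ≥ μ`, `𝒜x^m ≤ μ ∑ x_i^m` for all `x`, and every H-eigenvalue of `𝒜` is `≤ t`. -/
theorem feasible_upper_bound' (m n : ℕ) (heven : Even (m + 1))
    (A : (Fin (m + 1) → Fin n) → ℝ) (hsym : IsSymT A)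
    (t μ : ℝ)
    (hnn : ∀ x : Fin n → ℝ, 0 ≤ t - tmul A x + μ * ((∑ i, x i ^ (m + 1)) - 1)) :
    μ ≤ t ∧
    (∀ x : Fin n → ℝ, tmul A x ≤ μ * ∑ i, x i ^ (m + 1)) ∧
    (∀ lam : ℝ, IsHEig A lam → lam ≤ t) := by
  have hzero : tmul A (0 : Fin n → ℝ) = 0 := by
    unfold tmul
    apply Finset.sum_eq_zero
    intro g _
    simp
  have h0 := hnn 0
  rw [hzero] at h0
  simp at h0
  have h1 : μ ≤ t := by linarith
  have h2 : ∀ x : Fin n → ℝ, tmul A x ≤ μ * ∑ i, x i ^ (m + 1) := by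
    intro x
    by_contra hlt
    push_neg at hlt
    set S := ∑ i, x i ^ (m + 1) with hS
    set ε := tmul A x - μ * S with hε
    have hεpos : 0 < ε := by simp only [hε]; linarith
    set c := max 1 ((t - μ) / ε + 1) with hc
    have hc1 : (1 : ℝ) ≤ c := le_max_left _ _
    have hcpow : c ≤ c ^ (m + 1) := le_self_pow₀ hc1 (Nat.succ_ne_zero m)
    have hkey := hnn (c • x)
    rw [tmul_smul'] at hkey
    have hsum : ∑ i, (c • x) i ^ (m + 1) = c ^ (m + 1) * S := by
      rw [hS, Finset.mul_sum]
      exact Finset.sum_congr rfl fun i _ => by simp [mul_pow]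
    rw [hsum] at hkey
    have h3 : c ^ (m + 1) * ε ≤ t - μ := by nlinarith
    have h4 : (t - μ) / ε + 1 ≤ c := le_max_right _ _
    have h5 : t - μ + ε ≤ c ^ (m + 1) * ε := by
      have h6 := mul_le_mul_of_nonneg_right (h4.trans hcpow) hεpos.le
      calc t - μ + ε = ((t - μ) / ε + 1) * ε := by field_simp
        _ ≤ c ^ (m + 1) * ε := h6
    linarith
  refine ⟨h1, h2, ?_⟩
  rintro lam ⟨x, hx0, heig⟩
  have hT : tmul A x = lam * ∑ i, x i ^ (m + 1) := by
    unfold tmul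
    rw [← Equiv.sum_comp (Fin.consEquiv (fun _ : Fin (m + 1) => Fin n))
      (fun g => A g * ∏ j, x (g j)), Fintype.sum_prod_type]
    rw [Finset.mul_sum]
    refine Finset.sum_congr rfl fun i _ => ?_
    have hstep : ∑ g : Fin m → Fin n,
        A (Fin.cons i g) * ∏ j : Fin (m + 1), x ((Fin.cons i g : Fin (m + 1) → Fin n) j)
        = x i * ∑ g : Fin m → Fin n, A (Fin.cons i g) * ∏ j, x (g j) := by
      rw [Finset.mul_sum]
      refine Finset.sum_congr rfl fun g _ => ?_
      rw [Fin.prod_univ_succ]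
      simp only [Fin.cons_zero, Fin.cons_succ]
      ring
    simp only [Fin.consEquiv, Equiv.coe_fn_mk]
    rw [hstep, heig i]
    ring
  obtain ⟨i0, hi0⟩ := Function.ne_iff.mp hx0
  have hSpos : 0 < ∑ i, x i ^ (m + 1) := by
    refine Finset.sum_pos' (fun i _ => heven.pow_nonneg _) ⟨i0, Finset.mem_univ _, ?_⟩
    exact heven.pow_pos (by simpa using hi0)
  have := h2 x
  rw [hT] at this
  have hlm : lam ≤ μ := le_of_mul_le_mul_right (by linarith [this]) hSpos
  linarith


end
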